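/- arXiv:2010.10310 — 4 statements merged into one kernel-verified Lean document; each statement's English description precedes it below -/
import Mathlib

section
/- A diagonal {-1,1}-matrix contains no zero-sum square. More precisely, if M is an n×n matrix with entries a_{i,j} = 1 when i+j ≤ t+1 and a_{i,j} = -1 when i+j ≥ t+2 (for some fixed t), then there are no indices i, j and s ≥ 1 with i+s ≤ n and j+s ≤ n such that a_{i,j} + a_{i,j+s} + a_{i+s,j} + a_{i+s,j+s} = 0. -/
theorem diagonal_no_zero_sum_square (n t : ℕ) (a : ℕ → ℕ → ℤ)
    (hdiag : ∀ i j, 1 ≤ i → i ≤ n → 1 ≤ j → j ≤ n →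
      (i + j ≤ t + 1 → a i j = 1) ∧ (i + j ≥ t + 2 → a i j = -1)) :
    ∀ i j s, 1 ≤ i → 1 ≤ j → 1 ≤ s → i + s ≤ n → j + s ≤ n →
      a i j + a i (j + s) + a (i + s) j + a (i + s) (j + s) ≠ 0 := by
  intro i j s hi hj hs hin hjn h
  have h1 := hdiag i j hi (by omega) hj (by omega)
  have h2 := hdiag i (j+s) hi (by omega) (by omega) (by omega)
  have h3 := hdiag (i+s) j (by omega) (by omega) hj (by omega)
  have h4 := hdiag (i+s) (j+s) (by omega) (by omega) (by omega) (by omega)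
  by_cases hA : i + j ≤ t + 1 <;> by_cases hB : i + (j+s) ≤ t + 1 <;>
    by_cases hC : (i+s) + (j+s) ≤ t + 1 <;>
  · first
    | omega
    | (rw [(by first | exact h1.1 (by omega) | exact h1.2 (by omega) : a i j = _),
          (by first | exact h2.1 (by omega) | exact h2.2 (by omega) : a i (j+s) = _),
          (by first | exact h3.1 (by omega) | exact h3.2 (by omega) : a (i+s) j = _),
          (by first | exact h4.1 (by omega) | exact h4.2 (by omega) : a (i+s) (j+s) = _)] at h
       omega)
end

section
/- For n ≥ 8, every n×n {-1,1}-matrix M with |disc(M)| ≤ n²/4 contains an n'×n' consecutive submatrix M' with |disc(M')| ≤ (n')²/4 for some n' satisfying (n-1)/2 ≤ n' ≤ (n+1)/2. -/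
def Sm (a : ℕ → ℕ → ℤ) (r s u v : ℕ) : ℤ :=
  ∑ i ∈ Finset.Ioc r s, ∑ j ∈ Finset.Ioc u v, a i j

lemma Sm_split_rows (a : ℕ → ℕ → ℤ) {r s t : ℕ} (h1 : r ≤ s) (h2 : s ≤ t) (u v : ℕ) :
    Sm a r t u v = Sm a r s u v + Sm a s t u v := by
  unfold Sm
  rw [Finset.sum_Ioc_consecutive _ h1 h2]

lemma Sm_split_cols (a : ℕ → ℕ → ℤ) (r s : ℕ) {u v w : ℕ} (h1 : u ≤ v) (h2 : v ≤ w) :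
    Sm a r s u w = Sm a r s u v + Sm a r s v w := by
  unfold Sm
  rw [← Finset.sum_add_distrib]
  exact Finset.sum_congr rfl fun i _ => (Finset.sum_Ioc_consecutive _ h1 h2).symm

lemma Sm_bound {n : ℕ} {a : ℕ → ℕ → ℤ}
    (hval : ∀ i j, 1 ≤ i → i ≤ n → 1 ≤ j → j ≤ n → a i j = 1 ∨ a i j = -1)
    {r s u v : ℕ} (hrs : r ≤ s) (huv : u ≤ v) (hs : s ≤ n) (hv : v ≤ n) :
    |Sm a r s u v| ≤ ((s : ℤ) - r) * ((v : ℤ) - u) := by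
  unfold Sm
  calc |∑ i ∈ Finset.Ioc r s, ∑ j ∈ Finset.Ioc u v, a i j|
      ≤ ∑ i ∈ Finset.Ioc r s, |∑ j ∈ Finset.Ioc u v, a i j| := Finset.abs_sum_le_sum_abs _ _
    _ ≤ ∑ i ∈ Finset.Ioc r s, ∑ j ∈ Finset.Ioc u v, |a i j| :=
        Finset.sum_le_sum fun i _ => Finset.abs_sum_le_sum_abs _ _
    _ = ∑ i ∈ Finset.Ioc r s, ∑ j ∈ Finset.Ioc u v, (1 : ℤ) := by
        apply Finset.sum_congr rfl; intro i hi
        apply Finset.sum_congr rfl; intro j hj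
        simp only [Finset.mem_Ioc] at hi hj
        rcases hval i j (by omega) (by omega) (by omega) (by omega) with h | h <;> simp [h]
    _ = ((s : ℤ) - r) * ((v : ℤ) - u) := by
        simp only [Finset.sum_const, Nat.card_Ioc, nsmul_eq_mul, mul_one]
        push_cast [Nat.cast_sub hrs, Nat.cast_sub huv]
        ring

lemma step_row {n : ℕ} {a : ℕ → ℕ → ℤ}
    (hval : ∀ i j, 1 ≤ i → i ≤ n → 1 ≤ j → j ≤ n → a i j = 1 ∨ a i j = -1)
    {k r u : ℕ} (hk : 1 ≤ k) (h1 : r + 1 + k ≤ n) (h2 : u + k ≤ n) :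
    |Sm a (r+1) (r+1+k) u (u+k) - Sm a r (r+k) u (u+k)| ≤ 2 * k := by
  have e1 : Sm a r (r+1+k) u (u+k)
      = Sm a r (r+1) u (u+k) + Sm a (r+1) (r+1+k) u (u+k) :=
    Sm_split_rows a (by omega) (by omega) u (u+k)
  have e2 : Sm a r (r+1+k) u (u+k)
      = Sm a r (r+k) u (u+k) + Sm a (r+k) (r+1+k) u (u+k) :=
    Sm_split_rows a (by omega) (by omega) u (u+k)
  have b1 : |Sm a r (r+1) u (u+k)| ≤ ((r+1 : ℤ) - r) * ((u+k : ℤ) - u) :=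
    Sm_bound hval (by omega) (by omega) (by omega) h2
  have b2 : |Sm a (r+k) (r+1+k) u (u+k)| ≤ ((r+1+k : ℤ) - (r+k)) * ((u+k : ℤ) - u) :=
    Sm_bound hval (by omega) (by omega) (by omega) h2
  push_cast at b1 b2
  have hb1 := abs_le.mp b1
  have hb2 := abs_le.mp b2
  rw [abs_le]
  constructor <;> [skip; skip] <;> nlinarith [hb1.1, hb1.2, hb2.1, hb2.2]

lemma step_col {n : ℕ} {a : ℕ → ℕ → ℤ}
    (hval : ∀ i j, 1 ≤ i → i ≤ n → 1 ≤ j → j ≤ n → a i j = 1 ∨ a i j = -1)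
    {k r u : ℕ} (hk : 1 ≤ k) (h1 : r + k ≤ n) (h2 : u + 1 + k ≤ n) :
    |Sm a r (r+k) (u+1) (u+1+k) - Sm a r (r+k) u (u+k)| ≤ 2 * k := by
  have e1 : Sm a r (r+k) u (u+1+k)
      = Sm a r (r+k) u (u+1) + Sm a r (r+k) (u+1) (u+1+k) :=
    Sm_split_cols a _ _ (by omega) (by omega)
  have e2 : Sm a r (r+k) u (u+1+k)
      = Sm a r (r+k) u (u+k) + Sm a r (r+k) (u+k) (u+1+k) :=
    Sm_split_cols a _ _ (by omega) (by omega)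
  have b1 : |Sm a r (r+k) u (u+1)| ≤ ((r+k : ℤ) - r) * ((u+1 : ℤ) - u) :=
    Sm_bound hval (by omega) (by omega) h1 (by omega)
  have b2 : |Sm a r (r+k) (u+k) (u+1+k)| ≤ ((r+k : ℤ) - r) * ((u+1+k : ℤ) - (u+k)) :=
    Sm_bound hval (by omega) (by omega) h1 (by omega)
  push_cast at b1 b2
  have hb1 := abs_le.mp b1
  have hb2 := abs_le.mp b2
  rw [abs_le]
  constructor <;> nlinarith [hb1.1, hb1.2, hb2.1, hb2.2]

lemma ivt (T s : ℤ) (hT : 0 ≤ T) (hs : s ≤ 2*T+1) :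
    ∀ (L : ℕ) (f : ℕ → ℤ), (∀ i < L, |f (i+1) - f i| ≤ s) → T < f 0 → f L < -T →
    ∃ i ≤ L, |f i| ≤ T := by
  intro L
  induction L with
  | zero => intro f _ h0 hL; exfalso; omega
  | succ L ih =>
    intro f hstep h0 hL
    by_cases h1 : T < f 1
    · obtain ⟨i, hi, hgood⟩ := ih (fun i => f (i+1))
        (fun i hi => hstep (i+1) (by omega)) h1 hL
      exact ⟨i+1, by omega, hgood⟩
    · have h := hstep 0 (by omega)
      rw [zero_add] at h
      have := abs_le.mp h
      exact ⟨1, by omega, abs_le.mpr ⟨by omega, by omega⟩⟩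


lemma slide_row {n : ℕ} {a : ℕ → ℕ → ℤ}
    (hval : ∀ i j, 1 ≤ i → i ≤ n → 1 ≤ j → j ≤ n → a i j = 1 ∨ a i j = -1)
    {k u r1 r2 : ℕ} (hk : 4 ≤ k) (hu : u + k ≤ n) (h1 : r1 + k ≤ n) (h2 : r2 + k ≤ n)
    (hp : (k:ℤ)^2 < 4 * Sm a r1 (r1+k) u (u+k))
    (hq : 4 * Sm a r2 (r2+k) u (u+k) < -(k:ℤ)^2) :
    ∃ r, r + k ≤ n ∧ 4 * |Sm a r (r+k) u (u+k)| ≤ (k:ℤ)^2 := by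
  have hs : (8:ℤ) * k ≤ 2 * (k:ℤ)^2 + 1 := by nlinarith [(by exact_mod_cast hk : (4:ℤ) ≤ k)]
  have hT : (0:ℤ) ≤ (k:ℤ)^2 := by positivity
  rcases le_total r1 r2 with hle | hle
  · obtain ⟨i, hi, hgood⟩ := ivt ((k:ℤ)^2) (8*k) hT hs (r2 - r1)
      (fun i => 4 * Sm a (r1+i) (r1+i+k) u (u+k))
      (fun i hilt => by
        have hstep := step_row hval (k := k) (r := r1 + i) (u := u) (by omega)
          (by omega) hu
        calc |4 * Sm a (r1+i+1) (r1+i+1+k) u (u+k) - 4 * Sm a (r1+i) (r1+i+k) u (u+k)|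
            = 4 * |Sm a (r1+i+1) (r1+i+1+k) u (u+k) - Sm a (r1+i) (r1+i+k) u (u+k)| := by
              rw [← mul_sub, abs_mul]; norm_num
          _ ≤ 4 * (2 * k) := by linarith
          _ = 8 * k := by ring)
      (by simpa using hp)
      (by
        have h : r1 + (r2 - r1) = r2 := by omega
        simpa [h] using hq)
    refine ⟨r1 + i, by omega, ?_⟩
    rw [abs_mul] at hgood
    norm_num at hgood
    linarith
  · obtain ⟨i, hi, hgood⟩ := ivt ((k:ℤ)^2) (8*k) hT hs (r1 - r2)
      (fun i => 4 * Sm a (r1-i) (r1-i+k) u (u+k))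
      (fun i hilt => by
        have hr : r1 - (i+1) + 1 = r1 - i := by omega
        have hstep := step_row hval (k := k) (r := r1 - (i+1)) (u := u) (by omega)
          (by omega) hu
        rw [hr] at hstep
        calc |4 * Sm a (r1-(i+1)) (r1-(i+1)+k) u (u+k) - 4 * Sm a (r1-i) (r1-i+k) u (u+k)|
            = 4 * |Sm a (r1-i) (r1-i+k) u (u+k) - Sm a (r1-(i+1)) (r1-(i+1)+k) u (u+k)| := by
              rw [abs_sub_comm, ← mul_sub, abs_mul]; norm_num
          _ ≤ 4 * (2 * k) := by linarith
          _ = 8 * k := by ring)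
      (by simpa using hp)
      (by
        have h : r1 - (r1 - r2) = r2 := by omega
        simpa [h] using hq)
    refine ⟨r1 - i, by omega, ?_⟩
    rw [abs_mul] at hgood
    norm_num at hgood
    linarith

lemma slide_col {n : ℕ} {a : ℕ → ℕ → ℤ}
    (hval : ∀ i j, 1 ≤ i → i ≤ n → 1 ≤ j → j ≤ n → a i j = 1 ∨ a i j = -1)
    {k r u1 u2 : ℕ} (hk : 4 ≤ k) (hr : r + k ≤ n) (h1 : u1 + k ≤ n) (h2 : u2 + k ≤ n)
    (hp : (k:ℤ)^2 < 4 * Sm a r (r+k) u1 (u1+k))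
    (hq : 4 * Sm a r (r+k) u2 (u2+k) < -(k:ℤ)^2) :
    ∃ u, u + k ≤ n ∧ 4 * |Sm a r (r+k) u (u+k)| ≤ (k:ℤ)^2 := by
  have hs : (8:ℤ) * k ≤ 2 * (k:ℤ)^2 + 1 := by nlinarith [(by exact_mod_cast hk : (4:ℤ) ≤ k)]
  have hT : (0:ℤ) ≤ (k:ℤ)^2 := by positivity
  rcases le_total u1 u2 with hle | hle
  · obtain ⟨i, hi, hgood⟩ := ivt ((k:ℤ)^2) (8*k) hT hs (u2 - u1)
      (fun i => 4 * Sm a r (r+k) (u1+i) (u1+i+k))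
      (fun i hilt => by
        have hstep := step_col hval (k := k) (r := r) (u := u1 + i) (by omega)
          hr (by omega)
        calc |4 * Sm a r (r+k) (u1+i+1) (u1+i+1+k) - 4 * Sm a r (r+k) (u1+i) (u1+i+k)|
            = 4 * |Sm a r (r+k) (u1+i+1) (u1+i+1+k) - Sm a r (r+k) (u1+i) (u1+i+k)| := by
              rw [← mul_sub, abs_mul]; norm_num
          _ ≤ 4 * (2 * k) := by linarith
          _ = 8 * k := by ring)
      (by simpa using hp)
      (by
        have h : u1 + (u2 - u1) = u2 := by omega
        simpa [h] using hq)
    refine ⟨u1 + i, by omega, ?_⟩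
    rw [abs_mul] at hgood
    norm_num at hgood
    linarith
  · obtain ⟨i, hi, hgood⟩ := ivt ((k:ℤ)^2) (8*k) hT hs (u1 - u2)
      (fun i => 4 * Sm a r (r+k) (u1-i) (u1-i+k))
      (fun i hilt => by
        have hr2 : u1 - (i+1) + 1 = u1 - i := by omega
        have hstep := step_col hval (k := k) (r := r) (u := u1 - (i+1)) (by omega)
          hr (by omega)
        rw [hr2] at hstep
        calc |4 * Sm a r (r+k) (u1-(i+1)) (u1-(i+1)+k) - 4 * Sm a r (r+k) (u1-i) (u1-i+k)|
            = 4 * |Sm a r (r+k) (u1-i) (u1-i+k) - Sm a r (r+k) (u1-(i+1)) (u1-(i+1)+k)| := by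
              rw [abs_sub_comm, ← mul_sub, abs_mul]; norm_num
          _ ≤ 4 * (2 * k) := by linarith
          _ = 8 * k := by ring)
      (by simpa using hp)
      (by
        have h : u1 - (u1 - u2) = u2 := by omega
        simpa [h] using hq)
    refine ⟨u1 - i, by omega, ?_⟩
    rw [abs_mul] at hgood
    norm_num at hgood
    linarith

lemma path {n : ℕ} {a : ℕ → ℕ → ℤ}
    (hval : ∀ i j, 1 ≤ i → i ≤ n → 1 ≤ j → j ≤ n → a i j = 1 ∨ a i j = -1)
    {k r1 u1 r2 u2 : ℕ} (hk : 4 ≤ k)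
    (h1r : r1 + k ≤ n) (h1u : u1 + k ≤ n) (h2r : r2 + k ≤ n) (h2u : u2 + k ≤ n)
    (hp : (k:ℤ)^2 < 4 * Sm a r1 (r1+k) u1 (u1+k))
    (hq : 4 * Sm a r2 (r2+k) u2 (u2+k) < -(k:ℤ)^2) :
    ∃ r u, r + k ≤ n ∧ u + k ≤ n ∧ 4 * |Sm a r (r+k) u (u+k)| ≤ (k:ℤ)^2 := by
  by_cases hX1 : (k:ℤ)^2 < 4 * Sm a r2 (r2+k) u1 (u1+k)
  · obtain ⟨u, hu, hg⟩ := slide_col hval hk h2r h1u h2u hX1 hq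
    exact ⟨r2, u, h2r, hu, hg⟩
  · by_cases hX2 : 4 * Sm a r2 (r2+k) u1 (u1+k) < -(k:ℤ)^2
    · obtain ⟨r, hrr, hg⟩ := slide_row hval hk h1u h1r h2r hp hX2
      exact ⟨r, u1, hrr, h1u, hg⟩
    · push_neg at hX1 hX2
      refine ⟨r2, u1, h2r, h1u, ?_⟩
      have habs : |4 * Sm a r2 (r2+k) u1 (u1+k)| ≤ (k:ℤ)^2 := abs_le.mpr ⟨by linarith, hX1⟩
      rw [abs_mul] at habs
      norm_num at habs
      linarith


lemma bump {k : ℕ} {W : ℤ} (h : (k:ℤ)^2 < 4*W) : (k:ℤ)^2 + 3 ≤ 4*W := by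
  rcases Nat.even_or_odd k with ⟨t, ht⟩ | ⟨t, ht⟩ <;> subst ht <;> push_cast at h ⊢
  · have h' : (t:ℤ)^2 < W := by nlinarith
    nlinarith [Int.add_one_le_iff.mpr h']
  · have h' : (t:ℤ)^2 + t < W := by nlinarith
    nlinarith [Int.add_one_le_iff.mpr h']

lemma bump_neg {k : ℕ} {W : ℤ} (h : 4*W < -(k:ℤ)^2) : 4*W ≤ -(k:ℤ)^2 - 3 := by
  have := bump (W := -W) (k := k) (by linarith)
  linarith

lemma neg_of_bad {k : ℕ} {W : ℤ} (hb : (k:ℤ)^2 < 4*|W|) (hn : ¬ ((k:ℤ)^2 < 4*W)) :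
    4*W < -(k:ℤ)^2 := by
  push_neg at hn
  rcases abs_cases W with ⟨he, _⟩ | ⟨he, _⟩ <;> [linarith; linarith]

lemma family {n : ℕ} {a : ℕ → ℕ → ℤ}
    (hval : ∀ i j, 1 ≤ i → i ≤ n → 1 ≤ j → j ≤ n → a i j = 1 ∨ a i j = -1)
    {k r1 u1 r2 u2 r3 u3 r4 u4 : ℕ} (hk : 4 ≤ k)
    (v1r : r1 + k ≤ n) (v1u : u1 + k ≤ n) (v2r : r2 + k ≤ n) (v2u : u2 + k ≤ n)
    (v3r : r3 + k ≤ n) (v3u : u3 + k ≤ n) (v4r : r4 + k ≤ n) (v4u : u4 + k ≤ n)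
    (b1 : (k:ℤ)^2 < 4 * |Sm a r1 (r1+k) u1 (u1+k)|)
    (b2 : (k:ℤ)^2 < 4 * |Sm a r2 (r2+k) u2 (u2+k)|)
    (b3 : (k:ℤ)^2 < 4 * |Sm a r3 (r3+k) u3 (u3+k)|)
    (b4 : (k:ℤ)^2 < 4 * |Sm a r4 (r4+k) u4 (u4+k)|) :
    ((k:ℤ)^2 < 4 * Sm a r1 (r1+k) u1 (u1+k) ∧ (k:ℤ)^2 < 4 * Sm a r2 (r2+k) u2 (u2+k) ∧
     (k:ℤ)^2 < 4 * Sm a r3 (r3+k) u3 (u3+k) ∧ (k:ℤ)^2 < 4 * Sm a r4 (r4+k) u4 (u4+k)) ∨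
    (4 * Sm a r1 (r1+k) u1 (u1+k) < -(k:ℤ)^2 ∧ 4 * Sm a r2 (r2+k) u2 (u2+k) < -(k:ℤ)^2 ∧
     4 * Sm a r3 (r3+k) u3 (u3+k) < -(k:ℤ)^2 ∧ 4 * Sm a r4 (r4+k) u4 (u4+k) < -(k:ℤ)^2) ∨
    (∃ r u, r + k ≤ n ∧ u + k ≤ n ∧ 4 * |Sm a r (r+k) u (u+k)| ≤ (k:ℤ)^2) := by
  by_cases h1 : (k:ℤ)^2 < 4 * Sm a r1 (r1+k) u1 (u1+k)
  · by_cases h2 : (k:ℤ)^2 < 4 * Sm a r2 (r2+k) u2 (u2+k)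
    · by_cases h3 : (k:ℤ)^2 < 4 * Sm a r3 (r3+k) u3 (u3+k)
      · by_cases h4 : (k:ℤ)^2 < 4 * Sm a r4 (r4+k) u4 (u4+k)
        · exact Or.inl ⟨h1, h2, h3, h4⟩
        · exact Or.inr (Or.inr (path hval hk v1r v1u v4r v4u h1 (neg_of_bad b4 h4)))
      · exact Or.inr (Or.inr (path hval hk v1r v1u v3r v3u h1 (neg_of_bad b3 h3)))
    · exact Or.inr (Or.inr (path hval hk v1r v1u v2r v2u h1 (neg_of_bad b2 h2)))
  · have h1' := neg_of_bad b1 h1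
    by_cases h2 : (k:ℤ)^2 < 4 * Sm a r2 (r2+k) u2 (u2+k)
    · exact Or.inr (Or.inr (path hval hk v2r v2u v1r v1u h2 h1'))
    · by_cases h3 : (k:ℤ)^2 < 4 * Sm a r3 (r3+k) u3 (u3+k)
      · exact Or.inr (Or.inr (path hval hk v3r v3u v1r v1u h3 h1'))
      · by_cases h4 : (k:ℤ)^2 < 4 * Sm a r4 (r4+k) u4 (u4+k)
        · exact Or.inr (Or.inr (path hval hk v4r v4u v1r v1u h4 h1'))
        · exact Or.inr (Or.inl ⟨h1', neg_of_bad b2 h2, neg_of_bad b3 h3, neg_of_bad b4 h4⟩)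


lemma finish_aux {n k : ℕ} {a : ℕ → ℕ → ℤ} (hk : 1 ≤ k)
    (hlow : (n:ℤ) - 1 ≤ 2*(k:ℤ)) (hhigh : 2*(k:ℤ) ≤ (n:ℤ)+1)
    (h : ∃ r u, r + k ≤ n ∧ u + k ≤ n ∧ 4 * |Sm a r (r+k) u (u+k)| ≤ (k:ℤ)^2) :
    ∃ n' p q : ℕ, (n : ℤ) - 1 ≤ 2 * n' ∧ 2 * (n' : ℤ) ≤ n + 1 ∧
      1 ≤ p ∧ 1 ≤ q ∧ p + n' - 1 ≤ n ∧ q + n' - 1 ≤ n ∧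
      4 * |∑ i ∈ Finset.Icc p (p + n' - 1), ∑ j ∈ Finset.Icc q (q + n' - 1), a i j|
        ≤ (n' : ℤ) ^ 2 := by
  obtain ⟨r, u, hr, hu, hg⟩ := h
  refine ⟨k, r+1, u+1, hlow, hhigh, by omega, by omega, by omega, by omega, ?_⟩
  have e1 : Finset.Icc (r+1) (r+1+k-1) = Finset.Ioc r (r+k) := by ext x; simp
  have e2 : Finset.Icc (u+1) (u+1+k-1) = Finset.Ioc u (u+k) := by ext x; simp
  rw [e1, e2]
  exact hg

set_option maxHeartbeats 2000000 in
theorem exists_half_size_low_disc_submatrix (n : ℕ) (a : ℕ → ℕ → ℤ)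
    (hn : 8 ≤ n)
    (hval : ∀ i j, 1 ≤ i → i ≤ n → 1 ≤ j → j ≤ n → a i j = 1 ∨ a i j = -1)
    (hdisc : 4 * |∑ i ∈ Finset.Icc 1 n, ∑ j ∈ Finset.Icc 1 n, a i j| ≤ (n : ℤ) ^ 2) :
    ∃ n' p q : ℕ, (n : ℤ) - 1 ≤ 2 * n' ∧ 2 * (n' : ℤ) ≤ n + 1 ∧
      1 ≤ p ∧ 1 ≤ q ∧ p + n' - 1 ≤ n ∧ q + n' - 1 ≤ n ∧
      4 * |∑ i ∈ Finset.Icc p (p + n' - 1), ∑ j ∈ Finset.Icc q (q + n' - 1), a i j|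
        ≤ (n' : ℤ) ^ 2 := by
  have hdisc' : 4 * |Sm a 0 n 0 n| ≤ (n:ℤ)^2 := by
    have e : Finset.Icc 1 n = Finset.Ioc 0 n := by ext x; simp; omega
    rw [e] at hdisc
    exact hdisc
  obtain ⟨m, hm⟩ : ∃ m, n = 2*m ∨ n = 2*m+1 := ⟨n/2, by omega⟩
  have hm4 : 4 ≤ m := by omega
  rcases hm with hm | hm
  · -- EVEN CASE, k = m
    have hncast : (n:ℤ) = 2*(m:ℤ) := by exact_mod_cast congrArg (Nat.cast (R := ℤ)) hm
    have hlow : (n:ℤ) - 1 ≤ 2*(m:ℤ) := by linarith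
    have hhigh : 2*(m:ℤ) ≤ (n:ℤ)+1 := by linarith
    by_cases g1 : 4 * |Sm a 0 (0+m) 0 (0+m)| ≤ (m:ℤ)^2
    · exact finish_aux (by omega) hlow hhigh ⟨0, 0, by omega, by omega, g1⟩
    by_cases g2 : 4 * |Sm a 0 (0+m) m (m+m)| ≤ (m:ℤ)^2
    · exact finish_aux (by omega) hlow hhigh ⟨0, m, by omega, by omega, g2⟩
    by_cases g3 : 4 * |Sm a m (m+m) 0 (0+m)| ≤ (m:ℤ)^2
    · exact finish_aux (by omega) hlow hhigh ⟨m, 0, by omega, by omega, g3⟩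
    by_cases g4 : 4 * |Sm a m (m+m) m (m+m)| ≤ (m:ℤ)^2
    · exact finish_aux (by omega) hlow hhigh ⟨m, m, by omega, by omega, g4⟩
    push_neg at g1 g2 g3 g4
    rcases family hval hm4 (by omega) (by omega) (by omega) (by omega)
        (by omega) (by omega) (by omega) (by omega) g1 g2 g3 g4 with H | H | H
    rotate_right
    · exact finish_aux (by omega) hlow hhigh H
    all_goals {
      obtain ⟨h1, h2, h3, h4⟩ := H
      have e0 : 0 + m = m := by omega
      have e1 : m + m = n := by omega
      try simp only [zero_add, e1] at h1
      try simp only [zero_add, e1] at h2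
      try simp only [zero_add, e1] at h3
      try simp only [zero_add, e1] at h4
      have I1 : Sm a 0 n 0 n = Sm a 0 m 0 n + Sm a m n 0 n :=
        Sm_split_rows a (by omega) (by omega) 0 n
      have I2 : Sm a 0 m 0 n = Sm a 0 m 0 m + Sm a 0 m m n :=
        Sm_split_cols a 0 m (by omega) (by omega)
      have I3 : Sm a m n 0 n = Sm a m n 0 m + Sm a m n m n :=
        Sm_split_cols a m n (by omega) (by omega)
      have hT1 : 4 * Sm a 0 n 0 n ≤ (n:ℤ)^2 :=
        le_trans (by linarith [le_abs_self (Sm a 0 n 0 n)]) hdisc'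
      have hT2 : -((n:ℤ)^2) ≤ 4 * Sm a 0 n 0 n := by
        have := neg_abs_le (Sm a 0 n 0 n); linarith
      have hn2 : (n:ℤ)^2 = 4*(m:ℤ)^2 := by rw [hncast]; ring
      first
      | (exfalso
         have c1 := bump h1; have c2 := bump h2; have c3 := bump h3; have c4 := bump h4
         linarith)
      | (exfalso
         have c1 := bump_neg h1; have c2 := bump_neg h2
         have c3 := bump_neg h3; have c4 := bump_neg h4
         linarith)
    }
  · -- ODD CASE
    have hncast : (n:ℤ) = 2*(m:ℤ)+1 := by exact_mod_cast congrArg (Nat.cast (R := ℤ)) hm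
    have hlowm : (n:ℤ) - 1 ≤ 2*(m:ℤ) := by linarith
    have hhighm : 2*(m:ℤ) ≤ (n:ℤ)+1 := by linarith
    have hlowm1 : (n:ℤ) - 1 ≤ 2*((m+1:ℕ):ℤ) := by push_cast; linarith
    have hhighm1 : 2*((m+1:ℕ):ℤ) ≤ (n:ℤ)+1 := by push_cast; linarith
    by_cases g1 : 4 * |Sm a 0 (0+m) 0 (0+m)| ≤ (m:ℤ)^2
    · exact finish_aux (by omega) hlowm hhighm ⟨0, 0, by omega, by omega, g1⟩
    by_cases g2 : 4 * |Sm a 0 (0+m) (m+1) (m+1+m)| ≤ (m:ℤ)^2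
    · exact finish_aux (by omega) hlowm hhighm ⟨0, m+1, by omega, by omega, g2⟩
    by_cases g3 : 4 * |Sm a (m+1) (m+1+m) 0 (0+m)| ≤ (m:ℤ)^2
    · exact finish_aux (by omega) hlowm hhighm ⟨m+1, 0, by omega, by omega, g3⟩
    by_cases g4 : 4 * |Sm a (m+1) (m+1+m) (m+1) (m+1+m)| ≤ (m:ℤ)^2
    · exact finish_aux (by omega) hlowm hhighm ⟨m+1, m+1, by omega, by omega, g4⟩
    by_cases f1 : 4 * |Sm a 0 (0+(m+1)) 0 (0+(m+1))| ≤ ((m+1:ℕ):ℤ)^2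
    · exact finish_aux (by omega) hlowm1 hhighm1 ⟨0, 0, by omega, by omega, f1⟩
    by_cases f2 : 4 * |Sm a 0 (0+(m+1)) m (m+(m+1))| ≤ ((m+1:ℕ):ℤ)^2
    · exact finish_aux (by omega) hlowm1 hhighm1 ⟨0, m, by omega, by omega, f2⟩
    by_cases f3 : 4 * |Sm a m (m+(m+1)) 0 (0+(m+1))| ≤ ((m+1:ℕ):ℤ)^2
    · exact finish_aux (by omega) hlowm1 hhighm1 ⟨m, 0, by omega, by omega, f3⟩
    by_cases f4 : 4 * |Sm a m (m+(m+1)) m (m+(m+1))| ≤ ((m+1:ℕ):ℤ)^2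
    · exact finish_aux (by omega) hlowm1 hhighm1 ⟨m, m, by omega, by omega, f4⟩
    push_neg at g1 g2 g3 g4 f1 f2 f3 f4
    rcases family hval hm4 (by omega) (by omega) (by omega) (by omega)
        (by omega) (by omega) (by omega) (by omega) g1 g2 g3 g4 with HG | HG | HG
    rotate_right
    · exact finish_aux (by omega) hlowm hhighm HG
    all_goals
      rcases family hval (k := m+1) (by omega) (by omega) (by omega) (by omega) (by omega)
          (by omega) (by omega) (by omega) (by omega) f1 f2 f3 f4 with HF | HF | HF
    rotate_right
    · exact finish_aux (by omega) hlowm1 hhighm1 HF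
    rotate_left 2
    · exact finish_aux (by omega) hlowm1 hhighm1 HF
    all_goals {
      exfalso
      obtain ⟨h1, h2, h3, h4⟩ := HG
      obtain ⟨j1, j2, j3, j4⟩ := HF
      have e0 : 0 + m = m := by omega
      have e1 : m + 1 + m = n := by omega
      have e2 : 0 + (m+1) = m + 1 := by omega
      have e3 : m + (m+1) = n := by omega
      try simp only [zero_add, e1, e3] at h1
      try simp only [zero_add, e1, e3] at h2
      try simp only [zero_add, e1, e3] at h3
      try simp only [zero_add, e1, e3] at h4
      try simp only [zero_add, e1, e3] at j1
      try simp only [zero_add, e1, e3] at j2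
      try simp only [zero_add, e1, e3] at j3
      try simp only [zero_add, e1, e3] at j4
      have R1 : ∀ u v : ℕ, Sm a 0 (m+1) u v = Sm a 0 m u v + Sm a m (m+1) u v :=
        fun u v => Sm_split_rows a (by omega) (by omega) u v
      have R2 : ∀ u v : ℕ, Sm a 0 n u v = Sm a 0 (m+1) u v + Sm a (m+1) n u v :=
        fun u v => Sm_split_rows a (by omega) (by omega) u v
      have R3 : ∀ u v : ℕ, Sm a m n u v = Sm a m (m+1) u v + Sm a (m+1) n u v :=
        fun u v => Sm_split_rows a (by omega) (by omega) u v
      have C1 : ∀ r s : ℕ, Sm a r s 0 (m+1) = Sm a r s 0 m + Sm a r s m (m+1) :=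
        fun r s => Sm_split_cols a r s (by omega) (by omega)
      have C2 : ∀ r s : ℕ, Sm a r s 0 n = Sm a r s 0 (m+1) + Sm a r s (m+1) n :=
        fun r s => Sm_split_cols a r s (by omega) (by omega)
      have C3 : ∀ r s : ℕ, Sm a r s m n = Sm a r s m (m+1) + Sm a r s (m+1) n :=
        fun r s => Sm_split_cols a r s (by omega) (by omega)
      have hB22 : |Sm a m (m+1) m (m+1)| ≤ (((m:ℤ)+1) - m) * (((m:ℤ)+1) - m) := by
        have := Sm_bound hval (a := a) (r := m) (s := m+1) (u := m) (v := m+1)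
          (by omega) (by omega) (by omega) (by omega)
        push_cast at this ⊢; linarith [this]
      have hB22' := abs_le.mp hB22
      have hT1 : 4 * Sm a 0 n 0 n ≤ (n:ℤ)^2 :=
        le_trans (by linarith [le_abs_self (Sm a 0 n 0 n)]) hdisc'
      have hT2 : -((n:ℤ)^2) ≤ 4 * Sm a 0 n 0 n := by
        have := neg_abs_le (Sm a 0 n 0 n); linarith
      have hn2 : (n:ℤ)^2 = 4*(m:ℤ)^2 + 4*(m:ℤ) + 1 := by rw [hncast]; ring
      have hmsq : 4*(m:ℤ) ≤ (m:ℤ)^2 := by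
        nlinarith [(by exact_mod_cast hm4 : (4:ℤ) ≤ (m:ℤ))]
      have hB12 : |Sm a 0 m m (m+1)| ≤ ((m:ℤ) - 0) * (((m:ℤ)+1) - m) := by
        have := Sm_bound hval (a := a) (r := 0) (s := m) (u := m) (v := m+1)
          (by omega) (by omega) (by omega) (by omega)
        push_cast at this ⊢; linarith [this]
      have hB21 : |Sm a m (m+1) 0 (m+1)| ≤ (((m:ℤ)+1) - m) * (((m:ℤ)+1) - 0) := by
        have := Sm_bound hval (a := a) (r := m) (s := m+1) (u := 0) (v := m+1)
          (by omega) (by omega) (by omega) (by omega)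
        push_cast at this ⊢; linarith [this]
      have hB12' := abs_le.mp hB12
      have hB21' := abs_le.mp hB21
      first
      | (have c1 := bump h1; have c2 := bump h2; have c3 := bump h3; have c4 := bump h4
         have d1 := bump j1; have d2 := bump j2; have d3 := bump j3; have d4 := bump j4
         push_cast at d1 d2 d3 d4
         linarith [R2 0 n, R1 0 n, C2 0 m, C2 m (m+1), C2 (m+1) n, C1 0 m, C1 m (m+1),
           C1 (m+1) n, R1 0 (m+1), R1 m n, R3 0 (m+1), R3 m n, C3 0 m, C3 m (m+1),
           C3 (m+1) n])
      | (have c1 := bump_neg h1; have c2 := bump_neg h2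
         have c3 := bump_neg h3; have c4 := bump_neg h4
         have d1 := bump_neg j1; have d2 := bump_neg j2
         have d3 := bump_neg j3; have d4 := bump_neg j4
         push_cast at d1 d2 d3 d4
         linarith [R2 0 n, R1 0 n, C2 0 m, C2 m (m+1), C2 (m+1) n, C1 0 m, C1 m (m+1),
           C1 (m+1) n, R1 0 (m+1), R1 m n, R3 0 (m+1), R3 m n, C3 0 m, C3 m (m+1),
           C3 (m+1) n])
      | (have c1 := bump h1
         have d1 := bump_neg j1
         push_cast at d1
         linarith [R1 0 (m+1), C1 0 m, C1 m (m+1)])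
      | (have c1 := bump_neg h1
         have d1 := bump j1
         push_cast at d1
         linarith [R1 0 (m+1), C1 0 m, C1 m (m+1)])
    }
end

section
/- The n×n {-1,1}-matrix M with a_{i,j} = -1 if both i and j are odd and a_{i,j} = 1 otherwise contains no zero-sum square: for any indices i, j and any s ≥ 1 with i+s ≤ n and j+s ≤ n, the sum a_{i,j} + a_{i,j+s} + a_{i+s,j} + a_{i+s,j+s} is nonzero. -/
theorem odd_odd_matrix_no_zero_sum_square (n : ℕ) (a : ℕ → ℕ → ℤ)
    (ha : ∀ i j, 1 ≤ i → i ≤ n → 1 ≤ j → j ≤ n →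
      a i j = if Odd i ∧ Odd j then -1 else 1) :
    ∀ i j s, 1 ≤ i → 1 ≤ j → 1 ≤ s → i + s ≤ n → j + s ≤ n →
      a i j + a i (j + s) + a (i + s) j + a (i + s) (j + s) ≠ 0 := by
  intro i j s hi hj hs his hjs
  rw [ha i j (by omega) (by omega) (by omega) (by omega),
      ha i (j+s) (by omega) (by omega) (by omega) (by omega),
      ha (i+s) j (by omega) (by omega) (by omega) (by omega),
      ha (i+s) (j+s) (by omega) (by omega) (by omega) (by omega)]
  simp only [Nat.odd_iff]
  split_ifs <;> omega
end

section
/- Let M be an m×m {-1,1}-matrix with no zero-sum square such that a_{i,i} = 1 for all 1 ≤ i ≤ m-1. Then disc(M) ≥ -m. Consequently, if m ≥ 5 then disc(M) > -m²/4. -/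
theorem disc_lower_bound_of_diagonal_ones (m : ℕ) (a : ℕ → ℕ → ℤ)
    (hval : ∀ i j, 1 ≤ i → i ≤ m → 1 ≤ j → j ≤ m → a i j = 1 ∨ a i j = -1)
    (hfree : ∀ i j s, 1 ≤ i → 1 ≤ j → 1 ≤ s → i + s ≤ m → j + s ≤ m →
      a i j + a i (j + s) + a (i + s) j + a (i + s) (j + s) ≠ 0)
    (hdiag : ∀ i, 1 ≤ i → i ≤ m - 1 → a i i = 1) :
    (∑ i ∈ Finset.Icc 1 m, ∑ j ∈ Finset.Icc 1 m, a i j) ≥ -(m : ℤ) ∧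
    (5 ≤ m →
      4 * (∑ i ∈ Finset.Icc 1 m, ∑ j ∈ Finset.Icc 1 m, a i j) > -(m : ℤ) ^ 2) := by
  -- key pairing fact
  have hpair : ∀ i j, 1 ≤ i → i ≤ m - 1 → 1 ≤ j → j ≤ m - 1 → 0 ≤ a i j + a j i := by
    intro i j hi1 hi2 hj1 hj2
    have him : i ≤ m := le_trans hi2 (Nat.sub_le m 1)
    have hjm : j ≤ m := le_trans hj2 (Nat.sub_le m 1)
    have hii := hdiag i hi1 hi2
    have hjj := hdiag j hj1 hj2
    have hv1 := hval i j hi1 him hj1 hjm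
    have hv2 := hval j i hj1 hjm hi1 him
    rcases lt_trichotomy i j with h | h | h
    · have hf := hfree i i (j - i) hi1 hi1 (by omega) (by omega) (by omega)
      have he : i + (j - i) = j := by omega
      rw [he] at hf
      omega
    · subst h; omega
    · have hf := hfree j j (i - j) hj1 hj1 (by omega) (by omega) (by omega)
      have he : j + (i - j) = i := by omega
      rw [he] at hf
      omega
  have key : (-2 : ℤ) * m ≤
      ∑ i ∈ Finset.Icc 1 m, ∑ j ∈ Finset.Icc 1 m, (a i j + a j i) := by
    rcases Nat.eq_zero_or_pos m with rfl | hm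
    · simp
    · have hicc : Finset.Icc 1 m = insert m (Finset.Icc 1 (m - 1)) := by
        ext x
        simp only [Finset.mem_Icc, Finset.mem_insert]
        omega
      have hnot : m ∉ Finset.Icc 1 (m - 1) := by
        simp only [Finset.mem_Icc]; omega
      have hcard : (Finset.Icc 1 (m - 1)).card = m - 1 := by
        rw [Nat.card_Icc]; omega
      have hvmm := hval m m hm le_rfl hm le_rfl
      -- bound for Σ_{j ∈ Icc 1 (m-1)} (a m j + a j m)
      have hB : (-2 : ℤ) * ((m : ℤ) - 1) ≤
          ∑ j ∈ Finset.Icc 1 (m - 1), (a m j + a j m) := by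
        have hb : ∀ j ∈ Finset.Icc 1 (m - 1), (-2 : ℤ) ≤ a m j + a j m := by
          intro j hj
          simp only [Finset.mem_Icc] at hj
          have hjm : j ≤ m := le_trans hj.2 (Nat.sub_le m 1)
          have h1 := hval m j hm le_rfl hj.1 hjm
          have h2 := hval j m hj.1 hjm hm le_rfl
          omega
        calc (-2 : ℤ) * ((m : ℤ) - 1)
            = ∑ _j ∈ Finset.Icc 1 (m - 1), (-2 : ℤ) := by
              rw [Finset.sum_const, hcard, nsmul_eq_mul]
              omega
          _ ≤ _ := Finset.sum_le_sum hb
      -- bound for inner part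
      have hA : (0 : ℤ) ≤
          ∑ i ∈ Finset.Icc 1 (m - 1),
            ((a i m + a m i) + ∑ j ∈ Finset.Icc 1 (m - 1), (a i j + a j i)) := by
        apply Finset.sum_nonneg
        intro i hi
        simp only [Finset.mem_Icc] at hi
        have him : i ≤ m := le_trans hi.2 (Nat.sub_le m 1)
        have h1 := hval i m hi.1 him hm le_rfl
        have h2 := hval m i hm le_rfl hi.1 him
        have hinner : (2 : ℤ) ≤ ∑ j ∈ Finset.Icc 1 (m - 1), (a i j + a j i) := by
          have hmem : i ∈ Finset.Icc 1 (m - 1) := by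
            simp only [Finset.mem_Icc]; omega
          rw [← Finset.add_sum_erase _ _ hmem]
          have hii := hdiag i hi.1 hi.2
          have hrest : (0 : ℤ) ≤
              ∑ j ∈ (Finset.Icc 1 (m - 1)).erase i, (a i j + a j i) := by
            apply Finset.sum_nonneg
            intro j hj
            have hj' := Finset.mem_of_mem_erase hj
            simp only [Finset.mem_Icc] at hj'
            exact hpair i j hi.1 hi.2 hj'.1 hj'.2
          omega
        omega
      rw [hicc, Finset.sum_insert hnot]
      have hrw : ∀ i ∈ Finset.Icc 1 (m - 1),
          ∑ j ∈ insert m (Finset.Icc 1 (m - 1)), (a i j + a j i)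
            = (a i m + a m i) + ∑ j ∈ Finset.Icc 1 (m - 1), (a i j + a j i) := by
        intro i _
        rw [Finset.sum_insert hnot]
      rw [Finset.sum_insert hnot, Finset.sum_congr rfl hrw]
      have hmm2 : (-2 : ℤ) ≤ a m m + a m m := by omega
      linarith [hA, hB, hmm2]
  -- relate to disc
  have hsum : ∑ i ∈ Finset.Icc 1 m, ∑ j ∈ Finset.Icc 1 m, (a i j + a j i)
      = 2 * ∑ i ∈ Finset.Icc 1 m, ∑ j ∈ Finset.Icc 1 m, a i j := by
    have h1 : ∑ i ∈ Finset.Icc 1 m, ∑ j ∈ Finset.Icc 1 m, (a i j + a j i)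
        = (∑ i ∈ Finset.Icc 1 m, ∑ j ∈ Finset.Icc 1 m, a i j)
          + ∑ i ∈ Finset.Icc 1 m, ∑ j ∈ Finset.Icc 1 m, a j i := by
      simp [Finset.sum_add_distrib]
    rw [h1, Finset.sum_comm]
    ring
  rw [hsum] at key
  constructor
  · linarith
  · intro hm5
    have hmZ : (5 : ℤ) ≤ (m : ℤ) := by exact_mod_cast hm5
    nlinarith
end
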